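/- Let a < b be real numbers and ε₀ > 0. There exists a constant c₀ > 0 (depending only on a, b, ε₀) such that for every ε ∈ (0, ε₀] and every twice continuously differentiable function v : ℝ → ℝ, one has c₀·ε·∫ₐᵇ (v'(t))² dt ≤ (1/ε)·∫ₐᵇ (v(t))² dt + ε³·∫ₐᵇ (v''(t))² dt. -/

import Mathlib

/-!
Integrating by parts, `∫ₐᵇ v'² = [v v']ₐᵇ - ∫ₐᵇ v v''`, and for any length `L > 0` AM-GM bounds
the last integral by `(L⁻² ∫ₐᵇ v² + L² ∫ₐᵇ v''²) / 2`. When `L ≤ b - a`, the boundary terms are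
controlled on the subintervals of length `L` at the two ends: on such an interval `v²` is at most
its average somewhere in each outer quarter, so the mean value theorem gives a point where
`v'² ≲ L⁻³ ∫ v²`, and the fundamental theorem of calculus with Cauchy–Schwarz then bounds `v'²` by
`L⁻³ ∫ v² + L ∫ v''²` and `v²` by `L⁻¹ ∫ v² + L³ ∫ v''²` on the whole subinterval. Hence
`∫ₐᵇ v'² ≲ L⁻² ∫ₐᵇ v² + L² ∫ₐᵇ v''²`, and `L` proportional to `ε` gives the scaled inequality.
-/

open Set MeasureTheory intervalIntegral

lemma sq_intervalIntegral_le {f : ℝ → ℝ} {u w : ℝ} (huw : u ≤ w)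
    (hf : IntervalIntegrable f volume u w)
    (hf2 : IntervalIntegrable (fun t => f t ^ 2) volume u w) :
    (∫ t in u..w, f t) ^ 2 ≤ (w - u) * ∫ t in u..w, f t ^ 2 := by
  obtain rfl | huw := huw.eq_or_lt
  · simp
  have hL : 0 < w - u := sub_pos.2 huw
  have jensen : (⨍ t in u..w, f t) ^ 2 ≤ ⨍ t in u..w, f t ^ 2 :=
    (even_two.convexOn_pow).map_set_average_le (continuous_pow 2).continuousOn isClosed_univ
      (by simp [hL.ne']) (by simp) (by simp) hf.def' hf2.def'
  rw [interval_average_eq_div, interval_average_eq_div, div_pow,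
    div_le_div_iff₀ (by positivity) hL] at jensen
  nlinarith

lemma sq_intervalIntegral_le_of_mem_Icc {f : ℝ → ℝ} {u w p q : ℝ}
    (hf : IntervalIntegrable f volume u w)
    (hf2 : IntervalIntegrable (fun t => f t ^ 2) volume u w)
    (hp : p ∈ Icc u w) (hq : q ∈ Icc u w) :
    (∫ t in p..q, f t) ^ 2 ≤ (w - u) * ∫ t in u..w, f t ^ 2 := by
  wlog hpq : p ≤ q generalizing p q
  · rw [integral_symm, neg_sq]
    exact this hq hp (le_of_not_ge hpq)
  have hsub : uIcc p q ⊆ uIcc u w :=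
    uIcc_subset_uIcc (Icc_subset_uIcc hp) (Icc_subset_uIcc hq)
  calc (∫ t in p..q, f t) ^ 2 ≤ (q - p) * ∫ t in p..q, f t ^ 2 :=
        sq_intervalIntegral_le hpq (hf.mono_set hsub) (hf2.mono_set hsub)
    _ ≤ (w - u) * ∫ t in u..w, f t ^ 2 := by
        refine mul_le_mul (by linarith [hp.1, hq.2]) ?_
          (integral_nonneg hpq fun t _ => sq_nonneg (f t)) (by linarith [hp.1, hq.2, hpq])
        exact integral_mono_interval hp.1 hpq hq.2
          (Filter.Eventually.of_forall fun t => sq_nonneg (f t)) hf2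

lemma exists_mem_Ioo_mul_le_integral {g : ℝ → ℝ} {u w x y : ℝ} (hg : ContinuousOn g (Icc u w))
    (hg0 : ∀ t ∈ Icc u w, 0 ≤ g t) (hux : u ≤ x) (hxy : x < y) (hyw : y ≤ w) :
    ∃ s ∈ Ioo x y, g s * (y - x) ≤ ∫ t in u..w, g t := by
  obtain ⟨s, hs, hgs⟩ := exists_eq_interval_average hxy.ne
    (hg.mono ((uIcc_of_le hxy.le).trans_subset (Icc_subset_Icc hux hyw)))
  rw [uIoo_of_lt hxy] at hs
  rw [interval_average_eq_div] at hgs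
  refine ⟨s, hs, ?_⟩
  rw [hgs, div_mul_cancel₀ _ (sub_ne_zero.2 hxy.ne')]
  exact integral_mono_interval hux hxy.le hyw
    ((ae_restrict_mem measurableSet_Ioc).mono fun t ht => hg0 t (Ioc_subset_Icc_self ht))
    (hg.intervalIntegrable_of_Icc (hux.trans (hxy.le.trans hyw)))

lemma abs_mul_le_sq_div_add_mul_sq {c : ℝ} (hc : 0 < c) (p q : ℝ) :
    |p * q| ≤ p ^ 2 / (2 * c) + c * q ^ 2 / 2 := by
  rw [abs_mul, div_add_div _ _ (by positivity) two_ne_zero, le_div_iff₀ (by positivity)]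
  have h := two_mul_le_add_sq |p| (c * |q|)
  rw [mul_pow, sq_abs, sq_abs] at h
  nlinarith

section

variable {v : ℝ → ℝ} {u w : ℝ}

lemma exists_sq_deriv_mul_le (hv : Differentiable ℝ v) (huw : u < w) :
    ∃ ξ ∈ Ioo u w, deriv v ξ ^ 2 * (w - u) ^ 3 ≤ 64 * ∫ t in u..w, v t ^ 2 := by
  set L := w - u
  have hL : 0 < L := sub_pos.2 huw
  have hv2 : ContinuousOn (fun t => v t ^ 2) (Icc u w) := (hv.continuous.pow 2).continuousOn
  obtain ⟨x, hx, hvx⟩ := exists_mem_Ioo_mul_le_integral hv2 (fun t _ => sq_nonneg (v t))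
    le_rfl (show u < u + L / 4 by linarith) (by linarith)
  obtain ⟨y, hy, hvy⟩ := exists_mem_Ioo_mul_le_integral hv2 (fun t _ => sq_nonneg (v t))
    (by linarith) (show w - L / 4 < w by linarith) le_rfl
  have hgap : L / 2 ≤ y - x := by linarith [hx.2, hy.1]
  obtain ⟨ξ, hξ, hslope⟩ := exists_deriv_eq_slope v (by linarith : x < y)
    hv.continuous.continuousOn hv.differentiableOn
  refine ⟨ξ, ⟨hx.1.trans hξ.1, hξ.2.trans hy.2⟩, ?_⟩
  have hξ2 : deriv v ξ ^ 2 * (y - x) ^ 2 = (v y - v x) ^ 2 := by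
    rw [hslope, div_pow, div_mul_cancel₀ _ (pow_ne_zero 2 (by linarith))]
  have hdiff : (v y - v x) ^ 2 * L ≤ 16 * ∫ t in u..w, v t ^ 2 := by
    nlinarith [sq_nonneg (v y + v x)]
  calc deriv v ξ ^ 2 * L ^ 3 = 4 * (deriv v ξ ^ 2 * (L / 2) ^ 2 * L) := by ring
    _ ≤ 4 * (deriv v ξ ^ 2 * (y - x) ^ 2 * L) := by gcongr
    _ ≤ 64 * ∫ t in u..w, v t ^ 2 := by rw [hξ2]; linarith

lemma sq_deriv_le_of_mem_Icc (hv : ContDiff ℝ 2 v) (huw : u < w) {t : ℝ} (ht : t ∈ Icc u w) :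
    deriv v t ^ 2 ≤ 128 * (∫ s in u..w, v s ^ 2) / (w - u) ^ 3
      + 2 * (w - u) * ∫ s in u..w, deriv (deriv v) s ^ 2 := by
  have hv' : ContDiff ℝ 1 (deriv v) := hv.deriv'
  have hv'' : Continuous (deriv (deriv v)) := hv'.continuous_deriv le_rfl
  have hL : 0 < w - u := sub_pos.2 huw
  obtain ⟨ξ, hξ, hξbound⟩ := exists_sq_deriv_mul_le (hv.differentiable two_ne_zero) huw
  have hftc : deriv v t = deriv v ξ + ∫ s in ξ..t, deriv (deriv v) s := by
    rw [integral_deriv_eq_sub (fun s _ => hv'.differentiable one_ne_zero s)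
      (hv''.intervalIntegrable _ _)]
    ring
  have hI := sq_intervalIntegral_le_of_mem_Icc (hv''.intervalIntegrable u w)
    ((hv''.pow 2).intervalIntegrable u w) (Ioo_subset_Icc_self hξ) ht
  calc deriv v t ^ 2
      ≤ 2 * (deriv v ξ ^ 2 + (∫ s in ξ..t, deriv (deriv v) s) ^ 2) := hftc ▸ add_sq_le
    _ ≤ 2 * (64 * (∫ s in u..w, v s ^ 2) / (w - u) ^ 3
          + (w - u) * ∫ s in u..w, deriv (deriv v) s ^ 2) := by
        gcongr
        rwa [le_div_iff₀ (by positivity)]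
    _ = _ := by ring

lemma sq_le_of_mem_Icc (hv : ContDiff ℝ 2 v) (huw : u < w) {t : ℝ} (ht : t ∈ Icc u w) :
    v t ^ 2 ≤ 258 * (∫ s in u..w, v s ^ 2) / (w - u)
      + 4 * (w - u) ^ 3 * ∫ s in u..w, deriv (deriv v) s ^ 2 := by
  have hv' : Continuous (deriv v) := hv.continuous_deriv one_le_two
  have hL : 0 < w - u := sub_pos.2 huw
  set A := ∫ s in u..w, v s ^ 2
  set B := ∫ s in u..w, deriv (deriv v) s ^ 2
  obtain ⟨x, hx, hvx⟩ := exists_mem_Ioo_mul_le_integral (g := fun s => v s ^ 2)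
    (hv.continuous.pow 2).continuousOn
    (fun s _ => sq_nonneg (v s)) le_rfl huw le_rfl
  have hftc : v t = v x + ∫ s in x..t, deriv v s := by
    rw [integral_deriv_eq_sub (fun s _ => hv.differentiable two_ne_zero s)
      (hv'.intervalIntegrable _ _)]
    ring
  have hI := sq_intervalIntegral_le_of_mem_Icc (hv'.intervalIntegrable u w)
    ((hv'.pow 2).intervalIntegrable u w) (Ioo_subset_Icc_self hx) ht
  have hv'L2 : ∫ s in u..w, deriv v s ^ 2
      ≤ (w - u) * (128 * A / (w - u) ^ 3 + 2 * (w - u) * B) := by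
    calc ∫ s in u..w, deriv v s ^ 2
        ≤ ∫ _ in u..w, (128 * A / (w - u) ^ 3 + 2 * (w - u) * B) :=
          integral_mono_on huw.le ((hv'.pow 2).intervalIntegrable u w) intervalIntegrable_const
            fun s hs => sq_deriv_le_of_mem_Icc hv huw hs
      _ = _ := by rw [intervalIntegral.integral_const, smul_eq_mul]
  calc v t ^ 2 ≤ 2 * (v x ^ 2 + (∫ s in x..t, deriv v s) ^ 2) := hftc ▸ add_sq_le
    _ ≤ 2 * (A / (w - u)
          + (w - u) * ((w - u) * (128 * A / (w - u) ^ 3 + 2 * (w - u) * B))) := by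
        gcongr
        · rwa [le_div_iff₀ hL]
        · exact hI.trans (by gcongr)
    _ = _ := by field_simp; ring

lemma abs_mul_deriv_le_of_mem_Icc (hv : ContDiff ℝ 2 v) (huw : u < w) {t : ℝ}
    (ht : t ∈ Icc u w) :
    |v t * deriv v t| ≤ 193 * (∫ s in u..w, v s ^ 2) / (w - u) ^ 2
      + 3 * (w - u) ^ 2 * ∫ s in u..w, deriv (deriv v) s ^ 2 := by
  have hL : 0 < w - u := sub_pos.2 huw
  calc |v t * deriv v t| ≤ v t ^ 2 / (2 * (w - u)) + (w - u) * deriv v t ^ 2 / 2 :=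
        abs_mul_le_sq_div_add_mul_sq hL _ _
    _ ≤ (258 * (∫ s in u..w, v s ^ 2) / (w - u)
          + 4 * (w - u) ^ 3 * ∫ s in u..w, deriv (deriv v) s ^ 2) / (2 * (w - u))
        + (w - u) * (128 * (∫ s in u..w, v s ^ 2) / (w - u) ^ 3
          + 2 * (w - u) * ∫ s in u..w, deriv (deriv v) s ^ 2) / 2 := by
        gcongr
        exacts [sq_le_of_mem_Icc hv huw ht, sq_deriv_le_of_mem_Icc hv huw ht]
    _ = _ := by field_simp; ring

end

theorem integral_sq_deriv_le {v : ℝ → ℝ} (hv : ContDiff ℝ 2 v) {a b L : ℝ} (hL : 0 < L)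
    (hLab : L ≤ b - a) :
    ∫ t in a..b, deriv v t ^ 2 ≤ 387 * ((∫ t in a..b, v t ^ 2) / L ^ 2
      + L ^ 2 * ∫ t in a..b, deriv (deriv v) t ^ 2) := by
  have hab : a ≤ b := by linarith
  have hv' : ContDiff ℝ 1 (deriv v) := hv.deriv'
  have hvc : Continuous v := hv.continuous
  have hv'c : Continuous (deriv v) := hv'.continuous
  have hv''c : Continuous (deriv (deriv v)) := hv'.continuous_deriv le_rfl
  set A := ∫ t in a..b, v t ^ 2
  set B := ∫ t in a..b, deriv (deriv v) t ^ 2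
  have hA : 0 ≤ A := integral_nonneg hab fun t _ => sq_nonneg (v t)
  have hB : 0 ≤ B := integral_nonneg hab fun t _ => sq_nonneg (deriv (deriv v) t)
  have hparts : ∫ t in a..b, deriv v t ^ 2
      = v b * deriv v b - v a * deriv v a - ∫ t in a..b, v t * deriv (deriv v) t := by
    rw [integral_mul_deriv_eq_deriv_mul (fun t _ => (hv.differentiable two_ne_zero t).hasDerivAt)
      (fun t _ => (hv'.differentiable one_ne_zero t).hasDerivAt)
      (hv'c.intervalIntegrable _ _) (hv''c.intervalIntegrable _ _)]
    simp only [sq]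
    ring
  have hboundary : ∀ u, a ≤ u → u + L ≤ b → ∀ t ∈ Icc u (u + L),
      |v t * deriv v t| ≤ 193 * (A / L ^ 2) + 3 * (L ^ 2 * B) := by
    intro u hau hub t ht
    have hmono : ∀ f : ℝ → ℝ, Continuous f →
        ∫ s in u..u + L, f s ^ 2 ≤ ∫ s in a..b, f s ^ 2 := fun f hf =>
      integral_mono_interval hau (by linarith) hub
        (Filter.Eventually.of_forall fun s => sq_nonneg (f s)) ((hf.pow 2).intervalIntegrable _ _)
    have h := abs_mul_deriv_le_of_mem_Icc hv (by linarith : u < u + L) ht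
    rw [add_sub_cancel_left] at h
    calc |v t * deriv v t| ≤ _ := h
      _ ≤ 193 * A / L ^ 2 + 3 * L ^ 2 * B := by gcongr; exacts [hmono v hvc, hmono _ hv''c]
      _ = _ := by ring
  have hcross : |∫ t in a..b, v t * deriv (deriv v) t| ≤ (A / L ^ 2 + L ^ 2 * B) / 2 :=
    calc |∫ t in a..b, v t * deriv (deriv v) t| ≤ ∫ t in a..b, |v t * deriv (deriv v) t| :=
          abs_integral_le_integral_abs hab
      _ ≤ ∫ t in a..b, (v t ^ 2 / (2 * L ^ 2) + L ^ 2 * deriv (deriv v) t ^ 2 / 2) :=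
          integral_mono_on hab ((hvc.mul hv''c).abs.intervalIntegrable _ _)
            ((by fun_prop : Continuous _).intervalIntegrable _ _)
            fun t _ => abs_mul_le_sq_div_add_mul_sq (by positivity) _ _
      _ = (A / L ^ 2 + L ^ 2 * B) / 2 := by
          rw [intervalIntegral.integral_add ((by fun_prop : Continuous _).intervalIntegrable _ _)
            ((by fun_prop : Continuous _).intervalIntegrable _ _), intervalIntegral.integral_div,
            intervalIntegral.integral_div, intervalIntegral.integral_const_mul]
          field_simp
          ring
  have hb := hboundary (b - L) (by linarith) (by linarith) b ⟨by linarith, by linarith⟩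
  have ha := hboundary a le_rfl (by linarith) a ⟨le_rfl, by linarith⟩
  have hAL : 0 ≤ A / L ^ 2 := div_nonneg hA (sq_nonneg L)
  rw [hparts]
  linarith [le_abs_self (v b * deriv v b), neg_abs_le (v a * deriv v a),
    neg_abs_le (∫ t in a..b, v t * deriv (deriv v) t), mul_nonneg (sq_nonneg L) hB]

theorem scaled_gagliardo_nirenberg_1d (a b : ℝ) (hab : a < b)
    (ε₀ : ℝ) (hε₀ : 0 < ε₀) :
    ∃ c₀ > (0 : ℝ), ∀ ε : ℝ, ε ∈ Set.Ioc (0 : ℝ) ε₀ → ∀ v : ℝ → ℝ, ContDiff ℝ 2 v →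
      c₀ * ε * ∫ t in a..b, (deriv v t) ^ 2 ≤
        (1 / ε) * ∫ t in a..b, (v t) ^ 2 +
          ε ^ 3 * ∫ t in a..b, (deriv (deriv v) t) ^ 2 := by
  set m := min 1 ((b - a) / ε₀)
  have hm : 0 < m := lt_min one_pos (div_pos (sub_pos.2 hab) hε₀)
  refine ⟨m ^ 2 / 387, by positivity, ?_⟩
  rintro ε ⟨hε, hεε₀⟩ v hv
  have hmε : m * ε ≤ b - a :=
    calc m * ε ≤ (b - a) / ε₀ * ε₀ := mul_le_mul (min_le_right _ _) hεε₀ hε.le (by positivity)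
      _ = b - a := div_mul_cancel₀ _ hε₀.ne'
  have hm4 : m ^ 4 * ε ≤ b - a :=
    calc m ^ 4 * ε = m ^ 3 * (m * ε) := by ring
      _ ≤ m * ε := mul_le_of_le_one_left (by positivity) (pow_le_one₀ hm.le (min_le_left _ _))
      _ ≤ b - a := hmε
  have key := integral_sq_deriv_le hv (mul_pos hm hε) hmε
  set A := ∫ t in a..b, v t ^ 2
  set B := ∫ t in a..b, deriv (deriv v) t ^ 2
  have hB : 0 ≤ B := integral_nonneg hab.le fun t _ => sq_nonneg (deriv (deriv v) t)
  -- The binder of the second integral on the right extends over `+ ε ^ 3 * B`, so that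
  -- side is `(1 / ε) * (A + (b - a) * (ε ^ 3 * B))`.
  rw [intervalIntegral.integral_add (f := fun t => v t ^ 2)
    ((hv.continuous.pow 2).intervalIntegrable _ _) intervalIntegrable_const,
    intervalIntegral.integral_const, smul_eq_mul]
  calc m ^ 2 / 387 * ε * ∫ t in a..b, deriv v t ^ 2
      ≤ m ^ 2 / 387 * ε * (387 * (A / (m * ε) ^ 2 + (m * ε) ^ 2 * B)) := by gcongr
    _ = 1 / ε * (A + m ^ 4 * ε * (ε ^ 3 * B)) := by field_simp
    _ ≤ 1 / ε * (A + (b - a) * (ε ^ 3 * B)) := by gcongr
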